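/- Every signed poset on [n] is isomorphic to a naturally labeled signed poset; that is, for every signed poset P there exists ω ∈ S_n^B such that the identity signed permutation lies in the Jordan–Hölder set of ω^{-1}P. -/

import Mathlib

open Finset Pointwise

noncomputable section
attribute [local instance] Classical.propDecidable

/-- The `i`-th standard unit vector in `ℝ^n`. -/
def ee (n : ℕ) (i : Fin n) : Fin n → ℝ := fun j => if j = i then 1 else 0

/-- Standard inner product on `ℝ^n`. -/
def dot {n : ℕ} (a x : Fin n → ℝ) : ℝ := ∑ i, a i * x i

/-- The type-B root system `B_n`. -/
def Bn (n : ℕ) : Set (Fin n → ℝ) :=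
  {α | (∃ i : Fin n, α = ee n i ∨ α = -ee n i) ∨
       (∃ i j : Fin n, i < j ∧ (α = ee n i + ee n j ∨ α = -ee n i - ee n j ∨
          α = ee n i - ee n j ∨ α = -ee n i + ee n j))}

/-- The set of positive linear combinations of elements of `S`. -/
def PLC {n : ℕ} (S : Set (Fin n → ℝ)) : Set (Fin n → ℝ) :=
  {β | ∃ (m : ℕ) (c : Fin m → ℝ) (v : Fin m → (Fin n → ℝ)),
     (∀ k, 0 < c k) ∧ (∀ k, v k ∈ S) ∧ β = ∑ k, c k • v k}

/-- A signed poset on `[n]`: a subset of `B_n` with antisymmetry, closed under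
positive linear combinations within `B_n`. -/
def IsSignedPoset {n : ℕ} (P : Set (Fin n → ℝ)) : Prop :=
  P ⊆ Bn n ∧ (∀ α ∈ P, -α ∉ P) ∧ (∀ β ∈ Bn n, β ∈ PLC P → β ∈ P)

/-- The signed order cone `K_P`. -/
def orderCone {n : ℕ} (P : Set (Fin n → ℝ)) : Set (Fin n → ℝ) :=
  {x | ∀ α ∈ P, 0 ≤ dot α x}

/-- The signed order polytope `O_P = K_P ∩ [-1,1]^n`. -/
def orderPolytope {n : ℕ} (P : Set (Fin n → ℝ)) : Set (Fin n → ℝ) :=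
  {x | (∀ α ∈ P, 0 ≤ dot α x) ∧ ∀ i, -1 ≤ x i ∧ x i ≤ 1}

/-- A signed permutation on `[n]`, encoded as the underlying permutation `π`
(`π i = |ω(i)|`, zero-indexed) together with the signs (`true` means negative). -/
abbrev SignedPerm (n : ℕ) := Equiv.Perm (Fin n) × (Fin n → Bool)

/-- The sign `ε_i` of a signed permutation. -/
def sgn {n : ℕ} (σ : SignedPerm n) (i : Fin n) : ℝ := if σ.2 i then -1 else 1

/-- The signed permutation `σ` viewed as the point `(σ(1), ..., σ(n)) ∈ ℝ^n`. -/
def spt {n : ℕ} (σ : SignedPerm n) : Fin n → ℝ := fun i => sgn σ i * ((σ.1 i : ℕ) + 1)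

/-- The linear action of a signed permutation on `ℝ^n`, extending
`ω e_i = e_j` if `ω(i) = j` and `ω e_i = -e_j` if `ω(i) = -j`. -/
def sact {n : ℕ} (σ : SignedPerm n) (x : Fin n → ℝ) : Fin n → ℝ :=
  fun j => sgn σ (σ.1.symm j) * x (σ.1.symm j)

/-- The linear action of the inverse signed permutation `σ⁻¹` on `ℝ^n`. -/
def sactInv {n : ℕ} (σ : SignedPerm n) (x : Fin n → ℝ) : Fin n → ℝ :=
  fun i => sgn σ i * x (σ.1 i)

/-- The identity signed permutation. -/
def idSP (n : ℕ) : SignedPerm n := (Equiv.refl (Fin n), fun _ => false)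

/-- The Jordan–Hölder set of a signed poset. -/
def JH {n : ℕ} (P : Set (Fin n → ℝ)) : Set (SignedPerm n) :=
  {σ | ∀ α ∈ P, 0 ≤ dot α (spt σ)}

/-- The value `σ(k)` (as a real number), with the convention `σ(0) = 0`;
here `k` ranges over `0, 1, ..., n`. -/
def svalZ {n : ℕ} (σ : SignedPerm n) : ℕ → ℝ
  | 0 => 0
  | k + 1 => if h : k < n then spt σ ⟨k, h⟩ else 0

/-- The natural descent statistic `natdes(σ) = #{i ∈ {0,...,n-1} : σ(i) > σ(i+1)}`. -/
def natdes {n : ℕ} (σ : SignedPerm n) : ℕ :=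
  ((Finset.range n).filter (fun i => svalZ σ (i + 1) < svalZ σ i)).card

/-
Antisymmetry and closure under positive combinations keep `0` out of the convex hull of the
finite set `P`, so some `x` satisfies `⟨α, x⟩ > 0` for all `α ∈ P`. Let `ω` list the coordinates
of `x` by increasing absolute value, with the signs of `x`. Then `y = ω(id)` has the sign pattern
of `x`, and `|x_i| < |x_j|` forces `|y_i| < |y_j|`; for roots of the form `±e_i` and `±e_i ± e_j`
this suffices to turn `⟨α, x⟩ > 0` into `⟨α, y⟩ ≥ 0`, and `⟨ω⁻¹α, id⟩ = ⟨α, ω(id)⟩`.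
-/

theorem dot_eq_dotProduct {n : ℕ} (a x : Fin n → ℝ) : dot a x = a ⬝ᵥ x := rfl

theorem ee_eq_single (n : ℕ) (i : Fin n) : ee n i = Pi.single i 1 := by
  ext j
  simp [ee, Pi.single_apply]

theorem dot_sactInv {n : ℕ} (σ : SignedPerm n) (a x : Fin n → ℝ) :
    dot (sactInv σ a) x = dot a (sact σ x) := by
  simp only [dot, sactInv, sact]
  rw [← σ.1.symm.sum_comp]
  refine Finset.sum_congr rfl fun k _ => ?_
  simp only [Equiv.apply_symm_apply]
  ring

theorem neg_mem_Bn {n : ℕ} {α : Fin n → ℝ} (h : α ∈ Bn n) : -α ∈ Bn n := by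
  rcases h with ⟨i, rfl | rfl⟩ | ⟨i, j, hij, rfl | rfl | rfl | rfl⟩
  · exact Or.inl ⟨i, Or.inr rfl⟩
  · exact Or.inl ⟨i, Or.inl (neg_neg _)⟩
  all_goals refine Or.inr ⟨i, j, hij, ?_⟩
  · exact Or.inr (Or.inl (neg_add' _ _))
  · exact Or.inl (by abel)
  · exact Or.inr (Or.inr (Or.inr (by abel)))
  · exact Or.inr (Or.inr (Or.inl (by abel)))

theorem Bn_finite (n : ℕ) : (Bn n).Finite := by
  have hsub : Bn n ⊆ ⋃ i : Fin n, ⋃ j : Fin n,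
      ({ee n i, -ee n i, ee n i + ee n j, -ee n i - ee n j, ee n i - ee n j,
        -ee n i + ee n j} : Set (Fin n → ℝ)) := by
    rintro α (⟨i, h | h⟩ | ⟨i, j, -, h⟩) <;> simp only [Set.mem_iUnion]
    · exact ⟨i, i, by simp [h]⟩
    · exact ⟨i, i, by simp [h]⟩
    · exact ⟨i, j, by simp [h]⟩
  exact (Set.finite_iUnion fun i => Set.finite_iUnion fun j => Set.toFinite _).subset hsub

theorem sum_smul_mem_PLC {n : ℕ} {S : Set (Fin n → ℝ)} {ι : Type*} [Fintype ι] {c : ι → ℝ}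
    {v : ι → Fin n → ℝ} (hc : ∀ i, 0 < c i) (hv : ∀ i, v i ∈ S) : ∑ i, c i • v i ∈ PLC S :=
  let e := Fintype.equivFin ι
  ⟨Fintype.card ι, c ∘ e.symm, v ∘ e.symm, fun _ => hc _, fun _ => hv _,
    (e.symm.sum_comp fun i => c i • v i).symm⟩

theorem zero_notMem_convexHull {n : ℕ} {P : Set (Fin n → ℝ)} (hP : IsSignedPoset P) :
    (0 : Fin n → ℝ) ∉ convexHull ℝ P := by
  intro h0
  obtain ⟨ι, _, z, w, hzP, -, hw, hw1, hsum⟩ := eq_pos_convex_span_of_mem_convexHull h0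
  have hz : ∀ i, z i ∈ P := fun i => hzP (Set.mem_range_self i)
  obtain ⟨i₀⟩ : Nonempty ι := by
    by_contra h
    rw [not_nonempty_iff] at h
    simp at hw1
  -- Carathéodory makes all weights positive, so dividing `∑ w i • z i = 0` by `w i₀` writes
  -- `-z i₀` as a positive combination of elements of `P`.
  have hneg : -z i₀ = ∑ i : {i // i ≠ i₀}, (w i / w i₀) • z i := by
    rw [Fintype.sum_eq_add_sum_subtype_ne _ i₀, add_eq_zero_iff_eq_neg'] at hsum
    rw [← inv_smul_smul₀ (hw i₀).ne' (z i₀), ← smul_neg, ← hsum, Finset.smul_sum]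
    simp only [smul_smul, div_eq_inv_mul]
  exact hP.2.1 _ (hz i₀) (hP.2.2 _ (neg_mem_Bn (hP.1 (hz i₀)))
    (hneg ▸ sum_smul_mem_PLC (fun i => div_pos (hw i) (hw i₀)) fun i => hz i))

theorem exists_forall_dot_pos {n : ℕ} {S : Set (Fin n → ℝ)} (hS : S.Finite)
    (h0 : (0 : Fin n → ℝ) ∉ convexHull ℝ S) : ∃ x : Fin n → ℝ, ∀ α ∈ S, 0 < dot α x := by
  obtain ⟨f, u, hf0, hf⟩ := geometric_hahn_banach_point_closed (convex_convexHull ℝ S)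
    (hS.isCompact_convexHull (𝕜 := ℝ)).isClosed h0
  refine ⟨fun i => f (Pi.single i 1), fun α hα => ?_⟩
  have hfα : f α = dot α (fun i => f (Pi.single i 1)) := by
    conv_lhs => rw [pi_eq_sum_univ' α]
    simp [dot, map_sum]
  rw [map_zero] at hf0
  linarith [hf α (subset_convexHull ℝ S hα)]

theorem add_nonneg_of_sign_of_abs_lt {u v U V : ℝ} (hu : 0 < u → 0 ≤ U) (hv : 0 < v → 0 ≤ V)
    (huv : |u| < |v| → |U| < |V|) (hvu : |v| < |u| → |V| < |U|) (h : 0 < u + v) :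
    0 ≤ U + V := by
  wlog hle : v ≤ u generalizing u v U V
  · rw [add_comm] at h ⊢
    exact this hv hu hvu huv h (le_of_not_ge hle)
  have hU := hu (by linarith)
  rcases le_or_gt 0 V with hV | hV
  · linarith
  · have hv' : v ≤ 0 := not_lt.1 fun hv0 => hV.not_ge (hv hv0)
    have := hvu (by rw [abs_of_nonpos hv', abs_of_pos (by linarith)]; linarith)
    rw [abs_of_neg hV, abs_of_nonneg hU] at this
    linarith

theorem dot_nonneg_of_dot_pos {n : ℕ} {x y : Fin n → ℝ} (hpos : ∀ k, 0 < x k → 0 ≤ y k)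
    (hneg : ∀ k, 0 < -x k → 0 ≤ -y k) (habs : ∀ i j, |x i| < |x j| → |y i| < |y j|)
    {α : Fin n → ℝ} (hα : α ∈ Bn n) (h : 0 < dot α x) : 0 ≤ dot α y := by
  rcases hα with ⟨i, rfl | rfl⟩ | ⟨i, j, -, rfl | rfl | rfl | rfl⟩ <;>
    simp only [dot_eq_dotProduct, ee_eq_single, add_dotProduct, neg_dotProduct,
      single_dotProduct, one_mul, sub_eq_add_neg] at h ⊢
  · exact hpos i h
  · exact hneg i h
  · exact add_nonneg_of_sign_of_abs_lt (hpos i) (hpos j) (habs i j) (habs j i) h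
  · exact add_nonneg_of_sign_of_abs_lt (hneg i) (hneg j)
      (by simpa only [abs_neg] using habs i j) (by simpa only [abs_neg] using habs j i) h
  · exact add_nonneg_of_sign_of_abs_lt (hpos i) (hneg j)
      (by simpa only [abs_neg] using habs i j) (by simpa only [abs_neg] using habs j i) h
  · exact add_nonneg_of_sign_of_abs_lt (hneg i) (hpos j)
      (by simpa only [abs_neg] using habs i j) (by simpa only [abs_neg] using habs j i) h

theorem Tuple.sort_symm_lt_of_lt {m : ℕ} {β : Type*} [LinearOrder β] (f : Fin m → β) {i j : Fin m}
    (h : f i < f j) : (Tuple.sort f).symm i < (Tuple.sort f).symm j := by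
  by_contra! hle
  have := Tuple.monotone_sort f hle
  simp only [Function.comp_apply, Equiv.apply_symm_apply] at this
  exact this.not_gt h

def signedSort {n : ℕ} (x : Fin n → ℝ) : SignedPerm n :=
  (Tuple.sort fun i => |x i|, fun j => decide (x (Tuple.sort (fun i => |x i|) j) < 0))

theorem sact_signedSort_spt_idSP {n : ℕ} (x : Fin n → ℝ) (k : Fin n) :
    sact (signedSort x) (spt (idSP n)) k =
      (if x k < 0 then -1 else 1) * (((Tuple.sort fun i => |x i|).symm k : ℕ) + 1) := by
  simp [sact, spt, sgn, signedSort, idSP]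

theorem abs_sact_signedSort_spt_idSP {n : ℕ} (x : Fin n → ℝ) (k : Fin n) :
    |sact (signedSort x) (spt (idSP n)) k| = ((Tuple.sort fun i => |x i|).symm k : ℕ) + 1 := by
  rw [sact_signedSort_spt_idSP, abs_mul, abs_of_pos (by positivity : (0 : ℝ) < _ + 1)]
  split_ifs <;> simp

theorem dot_sact_signedSort_nonneg {n : ℕ} {x α : Fin n → ℝ} (hα : α ∈ Bn n)
    (h : 0 < dot α x) : 0 ≤ dot α (sact (signedSort x) (spt (idSP n))) := by
  refine dot_nonneg_of_dot_pos (fun k hk => ?_) (fun k hk => ?_) (fun i j hij => ?_) hα h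
  · simp only [sact_signedSort_spt_idSP, hk.not_gt, if_false, one_mul]
    positivity
  · simp only [sact_signedSort_spt_idSP, neg_pos.1 hk, if_true, neg_one_mul, neg_neg]
    positivity
  · simpa [abs_sact_signedSort_spt_idSP] using Tuple.sort_symm_lt_of_lt _ hij

/-- every signed poset is isomorphic to a naturally labeled one:
there is `ω ∈ S_n^B` with `id ∈ JH(ω⁻¹ P)`. -/
theorem stmt5 {n : ℕ} (P : Set (Fin n → ℝ)) (hP : IsSignedPoset P) :
    ∃ σ : SignedPerm n, idSP n ∈ JH (sactInv σ '' P) := by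
  obtain ⟨x, hx⟩ := exists_forall_dot_pos ((Bn_finite n).subset hP.1) (zero_notMem_convexHull hP)
  refine ⟨signedSort x, ?_⟩
  rintro _ ⟨α, hα, rfl⟩
  rw [dot_sactInv]
  exact dot_sact_signedSort_nonneg (hP.1 hα) (hx α hα)
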